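/- For every square-free word w (finite of length ≥ 2, or infinite), the word φ(w) is irreducibly square-free, where φ(0)=01202120102120210, φ(1)=12010201210201021, φ(2)=20121012021012102. In particular, there exists an infinite irreducibly square-free ternary word. -/

import Mathlib

/-- A word has a square if some nonempty `u` with `u ++ u` an infix. -/
def HasSquare (w : List (Fin 3)) : Prop :=
  ∃ u : List (Fin 3), u ≠ [] ∧ (u ++ u) <:+: w

def SquareFree (w : List (Fin 3)) : Prop := ¬ HasSquare w

/-- `u` occurs as a factor of the infinite word `x`. -/
def InfFactor (u : List (Fin 3)) (x : ℕ → Fin 3) : Prop :=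
  ∃ m : ℕ, ∀ i < u.length, u.getD i 0 = x (m + i)

def InfSquareFree (x : ℕ → Fin 3) : Prop :=
  ¬ ∃ u : List (Fin 3), u ≠ [] ∧ InfFactor (u ++ u) x

/-- A square-free word is irreducibly square-free if deleting any interior
letter creates a square. -/
def IrrSF (w : List (Fin 3)) : Prop :=
  SquareFree w ∧
    ∀ (w1 w2 : List (Fin 3)) (a : Fin 3),
      w = w1 ++ [a] ++ w2 → w1 ≠ [] → w2 ≠ [] → HasSquare (w1 ++ w2)

/-- The uniform morphism φ of length 17. -/
def phi : Fin 3 → List (Fin 3) := ![[0,1,2,0,2,1,2,0,1,0,2,1,2,0,2,1,0], [1,2,0,1,0,2,0,1,2,1,0,2,0,1,0,2,1], [2,0,1,2,1,0,1,2,0,2,1,0,1,2,1,0,2]]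

def phiW (w : List (Fin 3)) : List (Fin 3) := w.flatMap phi

/-- Applying the uniform length-17 morphism φ to an infinite word. -/
def phiInf (x : ℕ → Fin 3) (n : ℕ) : Fin 3 := (phi (x (n / 17))).getD (n % 17) 0

/-- Deleting the letter at position `n` of an infinite word. -/
def delAt (x : ℕ → Fin 3) (n : ℕ) (m : ℕ) : Fin 3 :=
  if m < n then x m else x (m + 1)

/-- An infinite word is irreducibly square-free: square-free, and deleting any
interior (position ≥ 1) letter creates a square. -/
def InfIrrSF (x : ℕ → Fin 3) : Prop :=
  InfSquareFree x ∧
    ∀ n : ℕ, 1 ≤ n → ∃ u : List (Fin 3), u ≠ [] ∧ InfFactor (u ++ u) (delAt x n)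

/-! `φ` is synchronizing: a block `φ(a)` occurs in a concatenation of blocks only at multiples
of 17. So a square of period at least 25 in `φ(w)` contains an aligned block whose copy is also
aligned, its period is a multiple `17 p`, and as the last letters of `φ(0)`, `φ(1)`, `φ(2)` are
distinct it descends to a square of period `p` in `w`. A square of period at most 24 lies in the
image of a factor of length 4, and the images of the square-free words of length at most 4 are
square-free. Deleting any letter of `φ(a) φ(b)` other than the first and the last creates a
square when `a ≠ b`, which gives irreducibility; the synchronization and deletion facts are
finite checks. Infinite words are handled through their finite prefixes, and a fixed point of
`φ` is an infinite example. -/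

namespace List

variable {α : Type*}

theorem exists_append_self_prefix_iff (t : List α) :
    (∃ u, u ≠ [] ∧ u ++ u <+: t) ↔ ∃ k < t.length / 2, t.take (k + 1) <+: t.drop (k + 1) := by
  constructor
  · rintro ⟨u, hu, r, rfl⟩
    have hu' : 0 < u.length := length_pos_iff.2 hu
    refine ⟨u.length - 1, ?_, ?_⟩
    · simp only [append_assoc, length_append]
      omega
    · rw [Nat.sub_add_cancel hu']
      simp
  · rintro ⟨k, hk, r, hr⟩
    refine ⟨t.take (k + 1), by rw [← length_pos_iff, length_take]; omega, r, ?_⟩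
    rw [append_assoc, hr, take_append_drop]

theorem exists_eq_append_cons_cons (w : List α) {q : ℕ} (hq : q + 2 ≤ w.length) :
    ∃ w₁ a b w₂, w = w₁ ++ a :: b :: w₂ ∧ w₁.length = q := by
  refine ⟨w.take q, w[q], w[q + 1], w.drop (q + 2), ?_, length_take_of_le (by omega)⟩
  rw [← drop_eq_getElem_cons, ← drop_eq_getElem_cons, take_append_drop]

theorem eraseIdx_append_singleton_append (l₁ l₂ : List α) (a : α) :
    (l₁ ++ [a] ++ l₂).eraseIdx l₁.length = l₁ ++ l₂ := by
  rw [append_assoc, eraseIdx_append_of_length_le le_rfl]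
  simp

theorem getD_eraseIdx (l : List α) (d : α) (n m : ℕ) :
    (l.eraseIdx n).getD m d = if m < n then l.getD m d else l.getD (m + 1) d := by
  simp only [getD_eq_getElem?_getD, getElem?_eraseIdx]
  split <;> rfl

theorem getD_map_range (x : ℕ → α) (d : α) {n K : ℕ} (h : n < K) :
    ((range K).map x).getD n d = x n := by
  simp [getD_eq_getElem?_getD, h]

theorem map_range_prefix (x : ℕ → α) {K K' : ℕ} (h : K ≤ K') :
    (range K).map x <+: (range K').map x := by
  rw [show (range K).map x = ((range K').map x).take K by
    rw [← map_take, take_range, min_eq_left h]]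
  exact take_prefix _ _

end List

def IsSquareAt {α : Type*} (f : ℕ → α) (i L : ℕ) : Prop :=
  0 < L ∧ ∀ j < L, f (i + j) = f (i + L + j)

theorem IsSquareAt.congr {α : Type*} {f g : ℕ → α} {i L : ℕ} (h : IsSquareAt f i L)
    (hfg : ∀ n < i + 2 * L, f n = g n) : IsSquareAt g i L :=
  ⟨h.1, fun j hj => by rw [← hfg _ (by omega), ← hfg _ (by omega), h.2 j hj]⟩

theorem HasSquare.infix {v w : List (Fin 3)} (h : HasSquare v) (hvw : v <:+: w) :
    HasSquare w :=
  let ⟨u, hu, huv⟩ := h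
  ⟨u, hu, huv.trans hvw⟩

theorem SquareFree.infix {v w : List (Fin 3)} (hw : SquareFree w) (hvw : v <:+: w) :
    SquareFree v :=
  fun h => hw (h.infix hvw)

theorem SquareFree.ne_of_eq_append_cons_cons {w w₁ w₂ : List (Fin 3)} {a b : Fin 3}
    (hw : SquareFree w) (h : w = w₁ ++ a :: b :: w₂) : a ≠ b := by
  rintro rfl
  exact hw ⟨[a], List.cons_ne_nil _ _, w₁, w₂, by simp [h]⟩

theorem squareFree_of_length_le_one {w : List (Fin 3)} (h : w.length ≤ 1) : SquareFree w := by
  rintro ⟨u, hu, huw⟩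
  have hle := huw.length_le
  rw [List.length_append] at hle
  have := List.length_pos_iff.2 hu
  omega

theorem hasSquare_iff_exists_tails (w : List (Fin 3)) :
    HasSquare w ↔ ∃ t ∈ w.tails, ∃ k < t.length / 2, t.take (k + 1) <+: t.drop (k + 1) := by
  simp only [HasSquare, List.infix_iff_prefix_suffix, List.mem_tails,
    ← List.exists_append_self_prefix_iff]
  grind

instance : DecidablePred HasSquare :=
  fun w => decidable_of_iff _ (hasSquare_iff_exists_tails w).symm

instance : DecidablePred SquareFree :=
  fun w => inferInstanceAs (Decidable ¬HasSquare w)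

theorem hasSquare_iff_isSquareAt_getD {w : List (Fin 3)} :
    HasSquare w ↔ ∃ i L, i + 2 * L ≤ w.length ∧ IsSquareAt (w.getD · 0) i L := by
  simp only [HasSquare, IsSquareAt, List.infix_iff_getElem?, List.length_append]
  constructor
  · rintro ⟨u, hu, i, hle, h⟩
    refine ⟨i, u.length, by omega, List.length_pos_iff.2 hu, fun j hj => ?_⟩
    simp only [List.getD_eq_getElem?_getD]
    rw [Nat.add_comm i j, h j (by omega), show i + u.length + j = u.length + j + i by omega,
      h (u.length + j) (by omega)]
    simp [List.getElem_append_left hj, List.getElem_append_right]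
  · rintro ⟨i, L, hle, hL, h⟩
    have hu : ((w.drop i).take L).length = L := List.length_take_of_le (by rw [List.length_drop]; omega)
    refine ⟨(w.drop i).take L, List.ne_nil_of_length_pos (by omega), i, by omega,
      fun j hj => ?_⟩
    rw [List.getElem?_eq_getElem (by omega)]
    congr 1
    rcases Nat.lt_or_ge j L with hjL | hjL
    · simp [List.getElem_append_left (by omega : j < ((w.drop i).take L).length), Nat.add_comm]
    · have := h (j - L) (by omega)
      rw [List.getD_eq_getElem _ _ (by omega), List.getD_eq_getElem _ _ (by omega)] at this
      simp [List.getElem_append_right (by omega : ((w.drop i).take L).length ≤ j), hu, this,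
        show i + L + (j - L) = j + i by omega]

theorem hasSquare_iff_isSquareAt {w : List (Fin 3)} {f : ℕ → Fin 3}
    (hf : ∀ n < w.length, w.getD n 0 = f n) :
    HasSquare w ↔ ∃ i L, i + 2 * L ≤ w.length ∧ IsSquareAt f i L := by
  rw [hasSquare_iff_isSquareAt_getD]
  exact exists₂_congr fun i L => and_congr_right fun hle =>
    ⟨fun h => h.congr fun n hn => hf n (by omega),
      fun h => h.congr fun n hn => (hf n (by omega)).symm⟩

theorem exists_infFactor_square_iff {x : ℕ → Fin 3} :
    (∃ u : List (Fin 3), u ≠ [] ∧ InfFactor (u ++ u) x) ↔ ∃ i L, IsSquareAt x i L := by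
  simp only [InfFactor, List.length_append]
  constructor
  · rintro ⟨u, hu, i, h⟩
    refine ⟨i, u.length, List.length_pos_iff.2 hu, fun j hj => ?_⟩
    rw [Nat.add_assoc, ← h j (by omega), ← h (u.length + j) (by omega),
      List.getD_append _ _ _ _ hj, List.getD_append_right _ _ _ _ (by omega)]
    simp
  · rintro ⟨i, L, hL, h⟩
    have hu : ((List.range L).map (fun j => x (i + j))).length = L := by simp
    refine ⟨(List.range L).map (fun j => x (i + j)), List.ne_nil_of_length_pos (by omega), i,
      fun j hj => ?_⟩
    rcases Nat.lt_or_ge j L with hjL | hjL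
    · rw [List.getD_append _ _ _ _ (by omega), List.getD_map_range _ _ hjL]
    · rw [List.getD_append_right _ _ _ _ (by omega), hu, List.getD_map_range _ _ (by omega),
        h _ (by omega)]
      congr 1
      omega

theorem infSquareFree_iff_forall_squareFree {x : ℕ → Fin 3} :
    InfSquareFree x ↔ ∀ K, SquareFree ((List.range K).map x) := by
  have hx (K : ℕ) := hasSquare_iff_isSquareAt (w := (List.range K).map x)
    fun n hn => List.getD_map_range x 0 (by simpa using hn)
  simp only [InfSquareFree, exists_infFactor_square_iff]
  refine ⟨fun h K hK => ?_, fun h ⟨i, L, hsq⟩ => ?_⟩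
  · obtain ⟨i, L, -, hsq⟩ := (hx K).1 hK
    exact h ⟨i, L, hsq⟩
  · exact h (i + 2 * L) ((hx _).2 ⟨i, L, by simp, hsq⟩)

theorem length_phi (a : Fin 3) : (phi a).length = 17 := by
  fin_cases a <;> rfl

theorem phiW_append (v w : List (Fin 3)) : phiW (v ++ w) = phiW v ++ phiW w :=
  List.flatMap_append

theorem length_phiW (w : List (Fin 3)) : (phiW w).length = 17 * w.length := by
  simp [phiW, List.length_flatMap, length_phi, mul_comm]

theorem phiInf_mul_add_of_lt (x : ℕ → Fin 3) (q : ℕ) {r : ℕ} (hr : r < 17) :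
    phiInf x (17 * q + r) = (phi (x q)).getD r 0 := by
  unfold phiInf
  congr 3 <;> omega

theorem phiInf_mul_add (x : ℕ → Fin 3) (q : ℕ) {s : ℕ} (hs : s < 34) :
    phiInf x (17 * q + s) = (phi (x q) ++ phi (x (q + 1))).getD s 0 := by
  rcases Nat.lt_or_ge s 17 with h | h
  · rw [List.getD_append _ _ _ _ (by rwa [length_phi]), phiInf_mul_add_of_lt x q h]
  · rw [List.getD_append_right _ _ _ _ (by rwa [length_phi]), length_phi,
      ← phiInf_mul_add_of_lt x (q + 1) (by omega)]
    congr 1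
    omega

theorem getD_phiW (w : List (Fin 3)) {n : ℕ} (hn : n < 17 * w.length) :
    (phiW w).getD n 0 = phiInf (w.getD · 0) n := by
  induction w generalizing n with
  | nil => simp at hn
  | cons a w ih =>
    have ha : (phiW [a]).length = 17 := by simp [phiW, length_phi]
    rw [show a :: w = [a] ++ w from rfl, phiW_append]
    unfold phiInf
    rcases Nat.lt_or_ge n 17 with h | h
    · rw [List.getD_append _ _ _ _ (ha ▸ h), Nat.div_eq_of_lt h, Nat.mod_eq_of_lt h]
      simp [phiW]
    · obtain ⟨m, rfl⟩ : ∃ m, n = m + 17 := ⟨n - 17, by omega⟩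
      rw [List.getD_append_right _ _ _ _ (ha ▸ h), ha, Nat.add_sub_cancel,
        ih (by rw [List.length_cons] at hn; omega)]
      simp [phiInf, Nat.add_div_right, Nat.add_mod_right]

theorem map_range_phiInf (x : ℕ → Fin 3) (K : ℕ) :
    (List.range (17 * K)).map (phiInf x) = phiW ((List.range K).map x) := by
  refine List.ext_getElem (by simp [length_phiW]) fun n hn _ => ?_
  rw [List.length_map, List.length_range] at hn
  rw [← List.getD_eq_getElem _ 0, ← List.getD_eq_getElem _ 0, getD_phiW _ (by simpa using hn),
    List.getD_map_range _ _ hn]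
  unfold phiInf
  dsimp only
  rw [List.getD_map_range _ _ (by omega)]

theorem map_range_delAt (y : ℕ → Fin 3) {n K : ℕ} (hn : n ≤ K) :
    (List.range K).map (delAt y n) = ((List.range (K + 1)).map y).eraseIdx n := by
  have hlen : ((List.range (K + 1)).map y).length = K + 1 := by simp
  refine List.ext_getElem (by rw [List.length_eraseIdx_of_lt (by omega), hlen]; simp)
    fun m hm _ => ?_
  rw [List.length_map, List.length_range] at hm
  rw [← List.getD_eq_getElem _ 0, ← List.getD_eq_getElem _ 0, List.getD_eraseIdx,
    List.getD_map_range _ _ hm]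
  unfold delAt
  split_ifs <;> rw [List.getD_map_range _ _ (by omega)]

theorem getD_phi_sixteen_injective : Function.Injective fun a => (phi a).getD 16 0 := by
  decide

theorem phi_not_occurs_at_offset :
    ∀ a b c : Fin 3, ∀ t < 17, 0 < t →
      ∃ r < 17, (phi b ++ phi c).getD (t + r) 0 ≠ (phi a).getD r 0 := by
  decide

theorem squareFree_phiW_of_length_le_four :
    ∀ v : List (Fin 3), v.length ≤ 4 → SquareFree v → SquareFree (phiW v)
  | [], _ => by decide
  | [a], _ => by revert a; decide +kernel
  | [a, b], _ => by revert a b; decide +kernel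
  | [a, b, c], _ => by revert a b c; decide +kernel
  | [a, b, c, d], _ => by revert a b c d; decide +kernel
  | _ :: _ :: _ :: _ :: _ :: _, h => by simp only [List.length_cons] at h; omega

theorem hasSquare_eraseIdx_phi_append_phi :
    ∀ a b : Fin 3, a ≠ b → ∀ p < 33, 0 < p → HasSquare ((phi a ++ phi b).eraseIdx p) := by
  decide +kernel

theorem mod_eq_zero_of_phi_occurs {x : ℕ → Fin 3} {a : Fin 3} {p : ℕ}
    (h : ∀ r < 17, phiInf x (p + r) = (phi a).getD r 0) : p % 17 = 0 := by
  by_contra hp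
  obtain ⟨r, hr, hne⟩ := phi_not_occurs_at_offset a (x (p / 17)) (x (p / 17 + 1)) (p % 17)
    (Nat.mod_lt _ (by norm_num)) (Nat.pos_of_ne_zero hp)
  apply hne
  rw [← phiInf_mul_add x _ (by omega), ← h r hr]
  congr 1
  omega

theorem IsSquareAt.mod_eq_zero_of_phiInf {x : ℕ → Fin 3} {i L : ℕ}
    (h : IsSquareAt (phiInf x) i L) (hL : 25 ≤ L) : L % 17 = 0 := by
  -- `k` is the first block starting inside the square: either block `k` lies in its first half
  -- or block `k + 1` lies in its second half, and the copy one period away must be aligned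
  set k := (i + 16) / 17
  by_cases hk : 17 * k + 17 ≤ i + L
  · have := mod_eq_zero_of_phi_occurs (a := x k) (p := 17 * k + L) fun r hr => by
      have := h.2 (17 * k + r - i) (by omega)
      rw [show i + (17 * k + r - i) = 17 * k + r by omega,
        show i + L + (17 * k + r - i) = 17 * k + L + r by omega] at this
      rw [← this, phiInf_mul_add_of_lt x k hr]
    omega
  · have := mod_eq_zero_of_phi_occurs (a := x (k + 1)) (p := 17 * k + 17 - L) fun r hr => by
      have := h.2 (17 * k + 17 - L + r - i) (by omega)
      rw [show i + (17 * k + 17 - L + r - i) = 17 * k + 17 - L + r by omega,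
        show i + L + (17 * k + 17 - L + r - i) = 17 * (k + 1) + r by omega] at this
      rw [this, phiInf_mul_add_of_lt x (k + 1) hr]
    omega

theorem IsSquareAt.of_phiInf {x : ℕ → Fin 3} {i p : ℕ} (h : IsSquareAt (phiInf x) i (17 * p)) :
    IsSquareAt x (i / 17) p := by
  refine ⟨by have := h.1; omega, fun j hj => getD_phi_sixteen_injective ?_⟩
  have := h.2 (17 * (i / 17 + j) + 16 - i) (by omega)
  rwa [show i + (17 * (i / 17 + j) + 16 - i) = 17 * (i / 17 + j) + 16 by omega,
    show i + 17 * p + (17 * (i / 17 + j) + 16 - i) = 17 * (i / 17 + p + j) + 16 by omega,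
    phiInf_mul_add_of_lt x _ (by norm_num), phiInf_mul_add_of_lt x _ (by norm_num)] at this

theorem squareFree_phiW {w : List (Fin 3)} (hw : SquareFree w) : SquareFree (phiW w) := by
  intro hsq
  obtain ⟨i, L, hle, hsq⟩ := (hasSquare_iff_isSquareAt fun n hn =>
    getD_phiW w (by rwa [length_phiW] at hn)).1 hsq
  rw [length_phiW] at hle
  rcases Nat.lt_or_ge L 25 with hL | hL
  · -- a square of period at most 24 lies in the image of four consecutive letters
    set q := i / 17
    set v := (w.drop q).take 4
    have hv : ∀ n < (phiW v).length, (phiW v).getD n 0 = phiInf (w.getD · 0) (17 * q + n) := by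
      intro n hn
      rw [length_phiW] at hn
      have hvn : v.getD (n / 17) 0 = w.getD (q + n / 17) 0 := by
        simp only [v, List.getD_eq_getElem?_getD, List.getElem?_take, List.getElem?_drop]
        rw [if_pos (by simp only [v, List.length_take, List.length_drop] at hn; omega)]
      rw [getD_phiW v hn]
      unfold phiInf
      dsimp only
      rw [hvn, show (17 * q + n) / 17 = q + n / 17 by omega,
        show (17 * q + n) % 17 = n % 17 by omega]
    refine squareFree_phiW_of_length_le_four v (by simp [v]) (hw.infix ?_)
      ((hasSquare_iff_isSquareAt hv).2 ⟨i - 17 * q, L, ?_, hsq.1, fun j hj => ?_⟩)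
    · exact (List.take_prefix _ _).isInfix.trans (List.drop_suffix _ _).isInfix
    · simp only [length_phiW, v, List.length_take, List.length_drop]
      omega
    · have := hsq.2 j hj
      dsimp only
      rwa [show 17 * q + (i - 17 * q + j) = i + j by omega,
        show 17 * q + (i - 17 * q + L + j) = i + L + j by omega]
  · obtain ⟨p, rfl⟩ : ∃ p, L = 17 * p := ⟨L / 17, by have := hsq.mod_eq_zero_of_phiInf hL; omega⟩
    exact hw ((hasSquare_iff_isSquareAt fun n _ => rfl).2 ⟨i / 17, p, by omega, hsq.of_phiInf⟩)

theorem hasSquare_eraseIdx_phiW {w : List (Fin 3)} (hw : SquareFree w) (hlen : 2 ≤ w.length)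
    {n : ℕ} (hn : 0 < n) (hn' : n + 1 < (phiW w).length) :
    HasSquare ((phiW w).eraseIdx n) := by
  rw [length_phiW] at hn'
  obtain ⟨q, p, rfl, hp, hp', hq⟩ : ∃ q p, n = 17 * q + p ∧ 0 < p ∧ p < 33 ∧ q + 2 ≤ w.length :=
    ⟨min ((n - 1) / 17) (w.length - 2), n - 17 * min ((n - 1) / 17) (w.length - 2),
      by omega, by omega, by omega, by omega⟩
  obtain ⟨w₁, a, b, w₂, rfl, rfl⟩ := w.exists_eq_append_cons_cons hq
  have hsplit : phiW (w₁ ++ a :: b :: w₂) = phiW w₁ ++ (phi a ++ phi b) ++ phiW w₂ := by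
    simp [phiW]
  rw [hsplit, List.eraseIdx_append_of_lt_length
    (by simp only [List.length_append, length_phiW, length_phi]; omega),
    List.eraseIdx_append_of_length_le (by simp [length_phiW]), length_phiW,
    Nat.add_sub_cancel_left]
  exact (hasSquare_eraseIdx_phi_append_phi a b (hw.ne_of_eq_append_cons_cons rfl) p hp'
    hp).infix (List.infix_append _ _ _)

theorem irrSF_phiW {w : List (Fin 3)} (hw : SquareFree w) (hlen : 2 ≤ w.length) :
    IrrSF (phiW w) := by
  refine ⟨squareFree_phiW hw, fun w₁ w₂ a h h₁ h₂ => ?_⟩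
  rw [← List.eraseIdx_append_singleton_append w₁ w₂ a, ← h]
  refine hasSquare_eraseIdx_phiW hw hlen (List.length_pos_iff.2 h₁) ?_
  have := List.length_pos_iff.2 h₂
  rw [h, List.length_append, List.length_append, List.length_singleton]
  omega

theorem infSquareFree_phiInf {x : ℕ → Fin 3} (hx : InfSquareFree x) :
    InfSquareFree (phiInf x) := by
  refine infSquareFree_iff_forall_squareFree.2 fun K => ?_
  have := squareFree_phiW (infSquareFree_iff_forall_squareFree.1 hx K)
  rw [← map_range_phiInf] at this
  exact this.infix (List.map_range_prefix _ (by omega)).isInfix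

theorem exists_square_delAt_phiInf {x : ℕ → Fin 3} (hx : InfSquareFree x) {n : ℕ}
    (hn : 1 ≤ n) : ∃ u : List (Fin 3), u ≠ [] ∧ InfFactor (u ++ u) (delAt (phiInf x) n) := by
  set K := n / 17 + 2
  have hsq := hasSquare_eraseIdx_phiW (infSquareFree_iff_forall_squareFree.1 hx K)
    (by simp [K]) hn (by simp only [K, length_phiW, List.length_map, List.length_range]; omega)
  rw [← map_range_phiInf, show 17 * K = 17 * K - 1 + 1 by omega,
    ← map_range_delAt _ (by omega)] at hsq
  by_contra h
  exact infSquareFree_iff_forall_squareFree.1 h _ hsq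

theorem infIrrSF_phiInf {x : ℕ → Fin 3} (hx : InfSquareFree x) : InfIrrSF (phiInf x) :=
  ⟨infSquareFree_phiInf hx, fun _ hn => exists_square_delAt_phiInf hx hn⟩

theorem infSquareFree_of_phiInf_eq {x : ℕ → Fin 3} (hx : phiInf x = x) : InfSquareFree x := by
  refine infSquareFree_iff_forall_squareFree.2 fun K => ?_
  induction K using Nat.strong_induction_on with
  | _ K ih =>
    rcases Nat.lt_or_ge K 2 with hK | hK
    · exact squareFree_of_length_le_one (by simp only [List.length_map, List.length_range]; omega)
    · have := squareFree_phiW (ih ((K + 16) / 17) (by omega))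
      rw [← map_range_phiInf, hx] at this
      exact this.infix (List.map_range_prefix _ (by omega)).isInfix

def phiFixedPoint : ℕ → Fin 3
  | 0 => 0
  | n + 1 => (phi (phiFixedPoint ((n + 1) / 17))).getD ((n + 1) % 17) 0

theorem phiInf_phiFixedPoint : phiInf phiFixedPoint = phiFixedPoint := by
  funext n
  cases n with
  | zero => rw [phiInf, phiFixedPoint]; rfl
  | succ n => rw [phiFixedPoint, phiInf]

theorem phi_of_squareFree_irreducibly_squareFree :
    (∀ w : List (Fin 3), SquareFree w → 2 ≤ w.length → IrrSF (phiW w)) ∧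
    (∀ x : ℕ → Fin 3, InfSquareFree x → InfIrrSF (phiInf x)) ∧
    (∃ y : ℕ → Fin 3, InfIrrSF y) :=
  ⟨fun _ => irrSF_phiW, fun _ => infIrrSF_phiInf,
    ⟨_, infIrrSF_phiInf (infSquareFree_of_phiInf_eq phiInf_phiFixedPoint)⟩⟩
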